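/- arXiv:2007.11062 — 8 statements merged into one kernel-verified Lean document; each statement's English description precedes it below -/
import Mathlib

section
/- A positive integer n is practical if and only if n = 1, or n ≥ 2 with prime factorization n = p₁^{α₁} p₂^{α₂} ⋯ p_k^{α_k} (p₁ < p₂ < ⋯ < p_k, all αᵢ > 0) satisfying p_j ≤ σ(p₁^{α₁} ⋯ p_{j-1}^{α_{j-1}}) + 1 for all 1 ≤ j ≤ k. -/
/-!
Sufficiency: if every `N ≤ σ(m)` is a sum of distinct divisors of `m`, `p ∤ m` and
`p ≤ σ(m) + 1`, then the same holds for every `m p^a`. Indeed the divisors of `m p^(a+1)` are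
those of `m` together with `p` times those of `m p^a`, and any `N ≤ σ(m) + p σ(m p^a)` splits as
`p c + r` with `c ≤ σ(m p^a)` and `r ≤ σ(m)`. Adjoining the prime powers of `n` in increasing
order of the primes gives the property for `n` itself, and `n ≤ σ(n)`.

Necessity: let `M` be the part of `n` over the primes below `p ≤ n`. If `σ(M) + 1 < p`, every
divisor of `n` occurring in a representation of `σ(M) + 1` is smaller than `p`, hence divides
`M`, so the representation sums to at most `σ(M)`.
-/

open Finset

/-- `n` is practical: every `m` with `1 ≤ m ≤ n` is a sum of distinct divisors of `n`. -/
def Practical (n : ℕ) : Prop :=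
  0 < n ∧ ∀ m : ℕ, 1 ≤ m → m ≤ n → ∃ s ⊆ n.divisors, ∑ d ∈ s, d = m

/-- Sum-of-divisors function. -/
def sigma (n : ℕ) : ℕ := ∑ d ∈ n.divisors, d

def SubsetSumsCover (A : Finset ℕ) (S : ℕ) : Prop :=
  ∀ N ≤ S, ∃ s ⊆ A, ∑ d ∈ s, d = N

namespace SubsetSumsCover

variable {A B : Finset ℕ} {S T : ℕ}

theorem mono (h : SubsetSumsCover A S) (hAB : A ⊆ B) : SubsetSumsCover B S :=
  fun N hN => (h N hN).imp fun _ ⟨hs, hsum⟩ => ⟨hs.trans hAB, hsum⟩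

theorem union_image_mul (hA : SubsetSumsCover A S) (hB : SubsetSumsCover B T) {q : ℕ}
    (hq : 0 < q) (hqS : q ≤ S + 1) (hdisj : Disjoint A (B.image (q * ·))) :
    SubsetSumsCover (A ∪ B.image (q * ·)) (S + q * T) := by
  intro N hN
  obtain ⟨c, hcT, hcN, hrest⟩ : ∃ c ≤ T, q * c ≤ N ∧ N - q * c ≤ S := by
    by_cases h : N / q ≤ T
    · refine ⟨N / q, h, Nat.mul_div_le N q, ?_⟩
      have := Nat.mod_lt N hq
      have := Nat.div_add_mod N q
      omega
    · exact ⟨T, le_rfl, (Nat.mul_le_mul_left q (not_le.1 h).le).trans (Nat.mul_div_le N q),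
        by omega⟩
  obtain ⟨s, hsA, hs⟩ := hA (N - q * c) hrest
  obtain ⟨t, htB, ht⟩ := hB c hcT
  refine ⟨s ∪ t.image (q * ·), union_subset_union hsA (image_subset_image htB), ?_⟩
  rw [sum_union (hdisj.mono hsA (image_subset_image htB)),
    sum_image fun _ _ _ _ => Nat.eq_of_mul_eq_mul_left hq, ← mul_sum, hs, ht]
  omega

end SubsetSumsCover

theorem subsetSumsCover_one : SubsetSumsCover (Nat.divisors 1) (sigma 1) := by
  intro N hN
  simp only [sigma, Nat.divisors_one, sum_singleton] at hN
  obtain rfl | rfl : N = 0 ∨ N = 1 := by omega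
  · exact ⟨∅, empty_subset _, rfl⟩
  · exact ⟨{1}, subset_rfl, rfl⟩

theorem sigma_mul_prime_pow_succ {m p : ℕ} (hp : p.Prime) (hpm : ¬ p ∣ m) (a : ℕ) :
    sigma (m * p ^ (a + 1)) = sigma m + p * sigma (m * p ^ a) := by
  have hcop (k : ℕ) : m.Coprime (p ^ k) := ((hp.coprime_iff_not_dvd.2 hpm).pow_left k).symm
  simp only [sigma, Nat.Coprime.sum_divisors_mul (hcop _), ← ArithmeticFunction.sigma_one_apply,
    ArithmeticFunction.sigma_one_apply_prime_pow hp, geom_sum_succ]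
  ring

theorem subsetSumsCover_mul_prime_pow {m p : ℕ} (hp : p.Prime) (hpm : ¬ p ∣ m)
    (hpσ : p ≤ sigma m + 1) (hm : SubsetSumsCover m.divisors (sigma m)) (a : ℕ) :
    SubsetSumsCover (m * p ^ a).divisors (sigma (m * p ^ a)) := by
  induction a with
  | zero => simpa using hm
  | succ a ih =>
    have hdisj : Disjoint m.divisors ((m * p ^ a).divisors.image (p * ·)) := by
      refine disjoint_left.2 fun d hdm hd => hpm ?_
      obtain ⟨e, -, rfl⟩ := mem_image.1 hd
      exact (dvd_mul_right p e).trans (Nat.dvd_of_mem_divisors hdm)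
    have hsub :
        m.divisors ∪ (m * p ^ a).divisors.image (p * ·) ⊆ (m * p ^ (a + 1)).divisors := by
      have hmul : m * p ^ (a + 1) = p * (m * p ^ a) := by ring
      intro d hd
      rw [hmul, Nat.mem_divisors]
      rcases mem_union.1 hd with hd | hd
      · obtain ⟨hdm, hm0⟩ := Nat.mem_divisors.1 hd
        exact ⟨(hdm.mul_right _).mul_left p, by simp [hm0, hp.ne_zero]⟩
      · obtain ⟨e, he, rfl⟩ := mem_image.1 hd
        obtain ⟨hem, hm0⟩ := Nat.mem_divisors.1 he
        exact ⟨mul_dvd_mul_left p hem, mul_ne_zero hp.ne_zero hm0⟩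
    rw [sigma_mul_prime_pow_succ hp hpm]
    exact (hm.union_image_mul ih hp.pos hpσ hdisj).mono hsub

/-- For `p = p_j` this is `p₁^α₁ ⋯ p_{j-1}^α_{j-1}`. -/
def smoothPart (n p : ℕ) : ℕ :=
  ∏ q ∈ n.primeFactors.filter (fun q => q < p), q ^ n.factorization q

section smoothPart

variable {n p : ℕ}

theorem smoothPart_pos : 0 < smoothPart n p :=
  prod_pos fun _ hq => pow_pos (Nat.pos_of_mem_primeFactors (mem_filter.1 hq).1) _

theorem smoothPart_zero : smoothPart n 0 = 1 := by
  simp [smoothPart]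

theorem smoothPart_succ (n k : ℕ) :
    smoothPart n (k + 1) = smoothPart n k * k ^ n.factorization k := by
  have hk : k ^ n.factorization k =
      ∏ q ∈ n.primeFactors, if q = k then q ^ n.factorization q else 1 := by
    rw [prod_ite_eq']
    split_ifs with hk
    · rfl
    · rw [Finsupp.notMem_support_iff.1 (by rwa [Nat.support_factorization]), pow_zero]
  rw [hk, smoothPart, smoothPart, prod_filter, prod_filter, ← prod_mul_distrib]
  refine prod_congr rfl fun q _ => ?_
  split_ifs <;> omega

theorem smoothPart_eq_self_of_lt (hn : n ≠ 0) (hnp : n < p) : smoothPart n p = n := by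
  rw [smoothPart, filter_true_of_mem fun q hq => (Nat.le_of_mem_primeFactors hq).trans_lt hnp,
    ← Nat.prod_primeFactors_pow_factorization hn]

theorem not_dvd_smoothPart (hp : p.Prime) : ¬ p ∣ smoothPart n p := by
  rw [smoothPart, Prime.dvd_finsetProd_iff hp.prime]
  rintro ⟨q, hq, hpq⟩
  obtain ⟨hqn, hqp⟩ := mem_filter.1 hq
  exact hqp.ne' ((Nat.prime_dvd_prime_iff_eq hp (Nat.prime_of_mem_primeFactors hqn)).1
    (hp.dvd_of_dvd_pow hpq))

theorem dvd_smoothPart_of_dvd_of_lt {d : ℕ} (hn : n ≠ 0) (hd : d ∣ n) (hdp : d < p) :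
    d ∣ smoothPart n p := by
  have hd0 : d ≠ 0 := ne_zero_of_dvd_ne_zero hn hd
  have hcop :
      d.Coprime (∏ q ∈ n.primeFactors.filter (fun q => ¬ q < p), q ^ n.factorization q) := by
    refine Nat.Coprime.prod_right fun q hq => Nat.Coprime.pow_right _ ?_
    obtain ⟨hqn, hpq⟩ := mem_filter.1 hq
    refine Nat.coprime_comm.1
      ((Nat.prime_of_mem_primeFactors hqn).coprime_iff_not_dvd.2 fun hqd => ?_)
    have := Nat.le_of_dvd (Nat.pos_of_ne_zero hd0) hqd
    omega
  refine hcop.dvd_of_dvd_mul_right ?_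
  rwa [smoothPart, prod_filter_mul_prod_filter_not, ← Nat.prod_primeFactors_pow_factorization hn]

end smoothPart

theorem subsetSumsCover_smoothPart {n : ℕ}
    (h : ∀ p : ℕ, p.Prime → p ∣ n → p ≤ sigma (smoothPart n p) + 1) (k : ℕ) :
    SubsetSumsCover (smoothPart n k).divisors (sigma (smoothPart n k)) := by
  induction k with
  | zero => rw [smoothPart_zero]; exact subsetSumsCover_one
  | succ k ih =>
    rw [smoothPart_succ]
    rcases eq_or_ne (n.factorization k) 0 with hk0 | hk0
    · simpa [hk0] using ih
    · have hk : k.Prime := Nat.prime_of_mem_primeFactors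
        (Nat.support_factorization n ▸ Finsupp.mem_support_iff.2 hk0)
      exact subsetSumsCover_mul_prime_pow hk (not_dvd_smoothPart hk)
        (h k hk (Nat.dvd_of_factorization_pos hk0)) ih _

theorem Practical.of_subsetSumsCover {n : ℕ} (hn : n ≠ 0)
    (h : SubsetSumsCover n.divisors (sigma n)) : Practical n :=
  ⟨Nat.pos_of_ne_zero hn, fun _ _ hm => h _ (hm.trans
    (single_le_sum (f := fun d => d) (fun _ _ => Nat.zero_le _) (Nat.mem_divisors_self n hn)))⟩

theorem Practical.le_sigma_smoothPart_add_one {n p : ℕ} (h : Practical n) (hpn : p ≤ n) :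
    p ≤ sigma (smoothPart n p) + 1 := by
  by_contra! hlt
  obtain ⟨s, hs, hsum⟩ := h.2 (sigma (smoothPart n p) + 1) le_add_self (by omega)
  have hsM : s ⊆ (smoothPart n p).divisors := fun d hd =>
    Nat.mem_divisors.2 ⟨dvd_smoothPart_of_dvd_of_lt h.1.ne' (Nat.dvd_of_mem_divisors (hs hd))
      (((single_le_sum (f := fun d => d) (fun _ _ => Nat.zero_le _) hd).trans hsum.le).trans_lt
        hlt), smoothPart_pos.ne'⟩
  have : ∑ d ∈ s, d ≤ sigma (smoothPart n p) := sum_le_sum_of_subset hsM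
  omega

theorem practical_iff_general (n : ℕ) :
    Practical n ↔
      (n = 1 ∨ (2 ≤ n ∧ ∀ p : ℕ, p.Prime → p ∣ n →
        p ≤ sigma (∏ q ∈ n.primeFactors.filter (fun q => q < p), q ^ n.factorization q) + 1)) := by
  constructor
  · intro h
    obtain rfl | h2 : n = 1 ∨ 2 ≤ n := by have := h.1; omega
    · exact Or.inl rfl
    · exact Or.inr ⟨h2, fun p _ hpn => h.le_sigma_smoothPart_add_one (Nat.le_of_dvd h.1 hpn)⟩
  · rintro (rfl | ⟨h2, hcond⟩)
    · exact Practical.of_subsetSumsCover one_ne_zero subsetSumsCover_one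
    · have hn : n ≠ 0 := by omega
      have hcover := subsetSumsCover_smoothPart hcond (n + 1)
      rw [smoothPart_eq_self_of_lt hn n.lt_succ_self] at hcover
      exact Practical.of_subsetSumsCover hn hcover

/-- Stewart–Sierpinski: `n` is practical iff `n = 1` or every prime `p` dividing `n`
satisfies `p ≤ σ(∏_{q prime, q < p} q^{v_q(n)}) + 1`. -/
theorem practical_iff (n : ℕ) (hn : 0 < n) :
    Practical n ↔
      (n = 1 ∨ (2 ≤ n ∧ ∀ p : ℕ, p.Prime → p ∣ n →
        p ≤ sigma (∏ q ∈ n.primeFactors.filter (fun q => q < p), q ^ n.factorization q) + 1)) :=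
  practical_iff_general n
end

section
/- If n is a practical number and m is a positive integer with m ≤ σ(n) + 1, then mn is practical. In particular, if n is practical and p is a prime with p ≤ σ(n) + 1, then np is practical. -/
open Finset

theorem Finset.exists_subset_sum_eq_of_le_one_add_sum_lt (s : Finset ℕ)
    (hs : ∀ d ∈ s, d ≤ 1 + ∑ e ∈ s with e < d, e) {k : ℕ} (hk : k ≤ ∑ e ∈ s, e) :
    ∃ t ⊆ s, ∑ e ∈ t, e = k := by
  induction s using Finset.induction_on_max generalizing k with
  | empty => exact ⟨∅, subset_refl _, by simpa using hk.antisymm' (Nat.zero_le k)⟩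
  | insert a s hlt ih =>
    have ha : a ∉ s := fun h => lt_irrefl a (hlt a h)
    have hs' : ∀ d ∈ s, d ≤ 1 + ∑ e ∈ s with e < d, e := by
      intro d hd
      have hfilter : {e ∈ insert a s | e < d} = {e ∈ s | e < d} := by
        rw [filter_insert, if_neg (hlt d hd).asymm]
      simpa [hfilter] using hs d (mem_insert_of_mem hd)
    have ha_le : a ≤ 1 + ∑ e ∈ s, e := by
      have hfilter : {e ∈ insert a s | e < a} = s := by
        rw [filter_insert, if_neg (lt_irrefl a), filter_true_of_mem hlt]
      simpa [hfilter] using hs a (mem_insert_self a s)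
    rw [sum_insert ha] at hk
    by_cases hak : a ≤ k
    · obtain ⟨t, hts, ht⟩ := ih hs' (k := k - a) (by omega)
      refine ⟨insert a t, insert_subset_insert a hts, ?_⟩
      rw [sum_insert (fun h => ha (hts h)), ht]
      omega
    · obtain ⟨t, hts, ht⟩ := ih hs' (k := k) (by omega)
      exact ⟨t, hts.trans (subset_insert a s), ht⟩

namespace Practical

variable {n : ℕ}

theorem le_sigma (hn : Practical n) : n ≤ sigma n :=
  single_le_sum (f := fun d => d) (fun _ _ => Nat.zero_le _) (Nat.mem_divisors_self n hn.1.ne')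

theorem le_one_add_sum_divisors_lt (hn : Practical n) {d : ℕ} (hd : d ∈ n.divisors) :
    d ≤ 1 + ∑ e ∈ n.divisors with e < d, e := by
  have hd_pos : 0 < d := Nat.pos_of_mem_divisors hd
  have hdn : d ≤ n := Nat.divisor_le hd
  obtain rfl | hd_one := (Nat.one_le_of_lt hd_pos).eq_or_lt
  · omega
  obtain ⟨t, htn, ht⟩ := hn.2 (d - 1) (by omega) (by omega)
  have htd : t ⊆ {e ∈ n.divisors | e < d} := fun e he =>
    mem_filter.mpr ⟨htn he, by
      have : e ≤ ∑ x ∈ t, x := single_le_sum (f := fun x => x) (fun _ _ => Nat.zero_le _) he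
      omega⟩
  have : ∑ e ∈ t, e ≤ ∑ e ∈ n.divisors with e < d, e := sum_le_sum_of_subset htd
  omega

theorem exists_subset_divisors_sum_eq (hn : Practical n) {k : ℕ} (hk : k ≤ sigma n) :
    ∃ t ⊆ n.divisors, ∑ e ∈ t, e = k :=
  n.divisors.exists_subset_sum_eq_of_le_one_add_sum_lt (fun _ => hn.le_one_add_sum_divisors_lt) hk

theorem mul (hn : Practical n) {m : ℕ} (hm : 0 < m) (hm_le : m ≤ sigma n + 1) :
    Practical (m * n) := by
  have hmn : m * n ≠ 0 := (Nat.mul_pos hm hn.1).ne'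
  refine ⟨Nat.pos_of_ne_zero hmn, fun k _ hk => ?_⟩
  have hq : k / m ≤ sigma n := by
    have := Nat.div_le_div_right (c := m) hk
    rw [Nat.mul_div_cancel_left n hm] at this
    exact this.trans hn.le_sigma
  have hr : k % m < m := Nat.mod_lt k hm
  obtain ⟨T, hTn, hT⟩ := hn.exists_subset_divisors_sum_eq hq
  obtain ⟨U, hUn, hU⟩ := hn.exists_subset_divisors_sum_eq (k := k % m) (by omega)
  have hdisj : Disjoint (T.image (m * ·)) U := by
    refine disjoint_left.mpr ?_
    rintro _ he heU
    obtain ⟨a, haT, rfl⟩ := mem_image.mp he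
    have hma : m ≤ m * a := Nat.le_mul_of_pos_right m (Nat.pos_of_mem_divisors (hTn haT))
    have : m * a ≤ ∑ e ∈ U, e := single_le_sum (f := fun e => e) (fun _ _ => Nat.zero_le _) heU
    omega
  refine ⟨T.image (m * ·) ∪ U, union_subset ?_ ?_, ?_⟩
  · intro _ he
    obtain ⟨a, haT, rfl⟩ := mem_image.mp he
    exact Nat.mem_divisors.mpr ⟨mul_dvd_mul_left m (Nat.dvd_of_mem_divisors (hTn haT)), hmn⟩
  · exact fun d hd => Nat.mem_divisors.mpr
      ⟨(Nat.dvd_of_mem_divisors (hUn hd)).mul_left m, hmn⟩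
  · rw [sum_union hdisj, sum_image (fun a _ b _ h => Nat.eq_of_mul_eq_mul_left hm h),
      ← mul_sum, hT, hU, Nat.div_add_mod]

end Practical

/-- If `n` is practical and `1 ≤ m ≤ σ(n) + 1` then `m * n` is practical; in particular,
if `p` is a prime with `p ≤ σ(n) + 1`, then `n * p` is practical. -/
theorem practical_mul (n : ℕ) (hn : Practical n) :
    (∀ m : ℕ, 0 < m → m ≤ sigma n + 1 → Practical (m * n)) ∧
    (∀ p : ℕ, p.Prime → p ≤ sigma n + 1 → Practical (n * p)) :=
  ⟨fun _ hm hm_le => hn.mul hm hm_le,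
    fun p hp hp_le => mul_comm p n ▸ hn.mul hp.pos hp_le⟩
end

section
/- If n is practical then σ(n) + 1 ≥ 2n. -/
/-! Writing `n - 1` as a sum of distinct divisors of `n` cannot use `n` itself, so adding the
divisor `n` to that sum gives `n + (n - 1) ≤ σ(n)`. -/

open Finset

theorem add_sum_le_sigma_of_subset_divisors {n : ℕ} (hn : n ≠ 0) {s : Finset ℕ}
    (hs : s ⊆ n.divisors) (hlt : ∑ d ∈ s, d < n) : n + ∑ d ∈ s, d ≤ sigma n := by
  have hns : n ∉ s := fun hmem =>
    hlt.not_ge (single_le_sum (f := id) (fun _ _ => Nat.zero_le _) hmem)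
  calc n + ∑ d ∈ s, d = ∑ d ∈ insert n s, d := (sum_insert (f := fun d => d) hns).symm
    _ ≤ sigma n := sum_le_sum_of_subset (insert_subset (Nat.mem_divisors_self n hn) hs)

/-- If `n` is practical then `σ(n) + 1 ≥ 2n`. -/
theorem sigma_ge_of_practical (n : ℕ) (hn : Practical n) : 2 * n ≤ sigma n + 1 := by
  obtain ⟨hpos, hsums⟩ := hn
  obtain rfl | htwo : n = 1 ∨ 2 ≤ n := by omega
  · simp [sigma]
  obtain ⟨s, hs, hsum⟩ := hsums (n - 1) (by omega) (by omega)
  have hbound := add_sum_le_sigma_of_subset_divisors hpos.ne' hs (by omega)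
  omega
end

section
/- Let θ be an arithmetic function with θ(n) ≥ 2 for all n, satisfying θ(mn) ≤ C m^A θ(n) for all m, n ≥ 1 (for some constants A, C). If d and k are positive integers with kd ∈ B_θ, then k ∈ B_{θ_d}, where θ_d(n) = C d^A θ(n). -/
/-- `n ∈ B_θ`: `n ≥ 1` and every prime `p` dividing `n` satisfies
`p ≤ θ(∏_{q prime, q < p, q ∣ n} q^{v_q(n)})`. -/
def BTheta (θ : ℕ → ℝ) (n : ℕ) : Prop :=
  0 < n ∧ ∀ p : ℕ, p.Prime → p ∣ n →
    (p : ℝ) ≤ θ (∏ q ∈ n.primeFactors.filter (fun q => q < p), q ^ n.factorization q)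

/-!
For a prime `p ∣ k`, the `p`-smooth part of `kd` (the primes below `p`, with multiplicity) is the
product of the `p`-smooth parts of `k` and of `d`, and the latter is at most `d`. So the growth
bound gives `θ(smooth part of kd) ≤ C d^A θ(smooth part of k)`. That this last step goes the
right way needs `C ≥ 0` and `A ≥ 0`, both forced by `θ` being bounded below by a positive constant.
-/

open Filter Topology

namespace Nat

def smoothPart (p n : ℕ) : ℕ :=
  (n.factorization.filter (· < p)).prod (· ^ ·)

theorem smoothPart_eq_prod (p n : ℕ) :
    smoothPart p n = ∏ q ∈ n.primeFactors.filter (· < p), q ^ n.factorization q := by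
  rw [smoothPart, Finsupp.prod_filter_index, Finsupp.support_filter, support_factorization]

theorem smoothPart_mul (p : ℕ) {m n : ℕ} (hm : m ≠ 0) (hn : n ≠ 0) :
    smoothPart p (m * n) = smoothPart p m * smoothPart p n := by
  rw [smoothPart, factorization_mul hm hn, Finsupp.filter_add,
    Finsupp.prod_add_index' (fun _ => pow_zero _) (fun _ => pow_add _)]
  rfl

theorem smoothPart_dvd (p n : ℕ) : smoothPart p n ∣ n := by
  obtain rfl | hn := eq_or_ne n 0
  · exact dvd_zero _
  refine Dvd.intro ((n.factorization.filter fun q => ¬q < p).prod (· ^ ·)) ?_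
  rw [smoothPart, Finsupp.prod_filter_mul_prod_filter_not, prod_factorization_pow_eq_self hn]

theorem smoothPart_pos (p : ℕ) {n : ℕ} (hn : 0 < n) : 0 < smoothPart p n :=
  pos_of_dvd_of_pos (smoothPart_dvd p n) hn

end Nat

section GrowthBound

variable {θ : ℕ → ℝ} {A C ε : ℝ}
  (hθ : ∀ m n : ℕ, 1 ≤ m → 1 ≤ n → θ (m * n) ≤ C * (m : ℝ) ^ A * θ n)
  (hε : 0 < ε) (hθε : ∀ n, ε ≤ θ n)
include hθ hε hθε

theorem one_le_const_of_growth_bound : 1 ≤ C := by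
  have h := hθ 1 1 le_rfl le_rfl
  rw [mul_one, Nat.cast_one, Real.one_rpow, mul_one] at h
  nlinarith [hθε 1]

theorem exponent_nonneg_of_growth_bound : 0 ≤ A := by
  by_contra! hA
  have hlim : Tendsto (fun m : ℕ => C * (m : ℝ) ^ A * θ 1) atTop (𝓝 0) := by
    simpa using (((tendsto_rpow_neg_atTop (neg_pos.2 hA)).comp
      tendsto_natCast_atTop_atTop).const_mul C).mul_const (θ 1)
  obtain ⟨m, hsmall, hm⟩ := ((hlim.eventually (gt_mem_nhds hε)).and (eventually_ge_atTop 1)).exists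
  have h := hθ m 1 hm le_rfl
  rw [mul_one] at h
  linarith [hθε m]

end GrowthBound

theorem mem_BTheta_of_dvd_general (θ : ℕ → ℝ) (A C : ℝ) (hθ2 : ∀ n : ℕ, 2 ≤ θ n)
    (hθ : ∀ m n : ℕ, 1 ≤ m → 1 ≤ n → θ (m * n) ≤ C * (m : ℝ) ^ A * θ n)
    (d k : ℕ) (h : BTheta θ (k * d)) :
    BTheta (fun n => C * (d : ℝ) ^ A * θ n) k := by
  obtain ⟨hkd, hB⟩ := h
  have hk : 0 < k := Nat.pos_of_mul_pos_right hkd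
  have hd : 0 < d := Nat.pos_of_mul_pos_left hkd
  have hC : 0 ≤ C := zero_le_one.trans (one_le_const_of_growth_bound hθ two_pos hθ2)
  have hA : 0 ≤ A := exponent_nonneg_of_growth_bound hθ two_pos hθ2
  refine ⟨hk, fun p hp hpk => ?_⟩
  have hdsmooth : (Nat.smoothPart p d : ℝ) ≤ d := by
    exact_mod_cast Nat.le_of_dvd hd (Nat.smoothPart_dvd p d)
  have hθk : 0 ≤ θ (Nat.smoothPart p k) := zero_le_two.trans (hθ2 _)
  rw [← Nat.smoothPart_eq_prod]
  calc (p : ℝ) ≤ θ (Nat.smoothPart p (k * d)) := by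
        simpa only [← Nat.smoothPart_eq_prod] using hB p hp (dvd_mul_of_dvd_left hpk d)
    _ = θ (Nat.smoothPart p d * Nat.smoothPart p k) := by
        rw [Nat.smoothPart_mul p hk.ne' hd.ne', mul_comm]
    _ ≤ C * (Nat.smoothPart p d : ℝ) ^ A * θ (Nat.smoothPart p k) :=
        hθ _ _ (Nat.smoothPart_pos p hd) (Nat.smoothPart_pos p hk)
    _ ≤ C * (d : ℝ) ^ A * θ (Nat.smoothPart p k) := by gcongr

/-- If `θ ≥ 2` and `θ(mn) ≤ C m^A θ(n)`, then `kd ∈ B_θ` implies `k ∈ B_{θ_d}`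
where `θ_d(n) = C d^A θ(n)`. -/
theorem mem_BTheta_of_dvd (θ : ℕ → ℝ) (A C : ℝ) (hθ2 : ∀ n : ℕ, 2 ≤ θ n)
    (hθ : ∀ m n : ℕ, 1 ≤ m → 1 ≤ n → θ (m * n) ≤ C * (m : ℝ) ^ A * θ n)
    (d k : ℕ) (hd : 0 < d) (hk : 0 < k) (h : BTheta θ (k * d)) :
    BTheta (fun n => C * (d : ℝ) ^ A * θ n) k :=
  mem_BTheta_of_dvd_general θ A C hθ2 hθ d k h
end

section
/- Let θ be an arithmetic function with θ(n) ≥ 2 for all n, and let f be an increasing function with θ(n) ≤ n f(n) for all n ≥ 1. If n ∈ B_{zθ} (meaning n satisfies the condition with θ replaced by z·θ, where z ≥ 1) and n ≤ x, then every prime p dividing n satisfies p² ≤ z x f(x). -/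
namespace Nat

theorem prod_primeFactors_filter_pow_factorization_dvd (n : ℕ) (P : ℕ → Prop)
    [DecidablePred P] :
    ∏ q ∈ n.primeFactors.filter P, q ^ n.factorization q ∣ n := by
  rcases eq_or_ne n 0 with rfl | hn
  · exact dvd_zero _
  conv_rhs => rw [prod_primeFactors_pow_factorization hn]
  exact Finset.prod_dvd_prod_of_subset _ _ _ (Finset.filter_subset _ _)

theorem Prime.not_dvd_prod_primeFactors_filter_lt {p : ℕ} (hp : p.Prime) (n : ℕ) :
    ¬ p ∣ ∏ q ∈ n.primeFactors.filter (· < p), q ^ n.factorization q := by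
  intro hdvd
  obtain ⟨q, hq, hpq⟩ := hp.prime.exists_mem_finset_dvd hdvd
  rw [Finset.mem_filter] at hq
  have hpq : p = q :=
    (prime_dvd_prime_iff_eq hp (prime_of_mem_primeFactors hq.1)).mp (hp.dvd_of_dvd_pow hpq)
  exact hq.2.ne' hpq

theorem Prime.mul_prod_primeFactors_filter_lt_dvd {p n : ℕ} (hp : p.Prime) (hpn : p ∣ n) :
    (∏ q ∈ n.primeFactors.filter (· < p), q ^ n.factorization q) * p ∣ n :=
  (hp.coprime_iff_not_dvd.mpr (hp.not_dvd_prod_primeFactors_filter_lt n)).symm.mul_dvd_of_dvd_of_dvd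
    (prod_primeFactors_filter_pow_factorization_dvd n _) hpn

end Nat

theorem sq_le_mul_of_le_mul_of_mul_le {α : Type*} [Semiring α] [LinearOrder α]
    [IsStrictOrderedRing α] {a c m x : α} (ha : 0 < a) (hm : 0 ≤ m) (hac : a ≤ c * m)
    (hmx : m * a ≤ x) : a ^ 2 ≤ c * x := by
  have hc : 0 ≤ c := (pos_of_mul_pos_left (ha.trans_le hac) hm).le
  calc a ^ 2 = a * a := sq a
    _ ≤ c * m * a := by gcongr
    _ = c * (m * a) := mul_assoc c m a
    _ ≤ c * x := by gcongr

theorem prime_sq_le_general (θ : ℕ → ℝ) (f : ℕ → ℝ)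
    (hf : Monotone f) (hθf : ∀ n : ℕ, 1 ≤ n → θ n ≤ (n : ℝ) * f n)
    (z : ℝ) (hz : 1 ≤ z) (n x : ℕ) (hn : BTheta (fun m => z * θ m) n) (hnx : n ≤ x)
    (p : ℕ) (hp : p.Prime) (hpn : p ∣ n) :
    ((p : ℝ)) ^ 2 ≤ z * (x : ℝ) * f x := by
  obtain ⟨hn0, hB⟩ := hn
  set m := ∏ q ∈ n.primeFactors.filter (· < p), q ^ n.factorization q
  have hmp : m * p ≤ x :=
    (Nat.le_of_dvd hn0 (hp.mul_prod_primeFactors_filter_lt_dvd hpn)).trans hnx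
  have hmx : m ≤ x := (Nat.le_mul_of_pos_right m hp.pos).trans hmp
  have hm0 : 1 ≤ m :=
    Nat.pos_of_dvd_of_pos (Nat.prod_primeFactors_filter_pow_factorization_dvd n _) hn0
  have hpm : (p : ℝ) ≤ z * f x * m :=
    calc (p : ℝ) ≤ z * θ m := hB p hp hpn
      _ ≤ z * (m * f m) := by gcongr; exact hθf m hm0
      _ ≤ z * (m * f x) := by gcongr; exact hf hmx
      _ = z * f x * m := by ring
  calc (p : ℝ) ^ 2 ≤ z * f x * x :=
        sq_le_mul_of_le_mul_of_mul_le (mod_cast hp.pos) m.cast_nonneg hpm (mod_cast hmp)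
    _ = z * x * f x := mul_right_comm _ _ _

/-- If `θ ≥ 2`, `f` is increasing with `θ(n) ≤ n f(n)`, `z ≥ 1`, `n ∈ B_{zθ}` and `n ≤ x`,
then every prime `p ∣ n` has `p² ≤ z x f(x)`. -/
theorem prime_sq_le (θ : ℕ → ℝ) (f : ℕ → ℝ) (hθ2 : ∀ n : ℕ, 2 ≤ θ n)
    (hf : Monotone f) (hθf : ∀ n : ℕ, 1 ≤ n → θ n ≤ (n : ℝ) * f n)
    (z : ℝ) (hz : 1 ≤ z) (n x : ℕ) (hn : BTheta (fun m => z * θ m) n) (hnx : n ≤ x)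
    (p : ℕ) (hp : p.Prime) (hpn : p ∣ n) :
    ((p : ℝ)) ^ 2 ≤ z * (x : ℝ) * f x :=
  prime_sq_le_general θ f hf hθf z hz n x hn hnx p hp hpn
end

section
/- Every even positive integer is the sum of two practical numbers. -/
/-! If `m` is practical and `k ≤ σ(m) + 1`, then `m * k` is practical; so `2 ^ (t + 1) * V` is
practical for `V ≤ 2 ^ (t + 2)`, and so is `2 * 3 ^ j * W` for `W ≤ σ(2 * 3 ^ j) + 1`.
For `R = 3 ^ j` and `2 ^ t` the largest power of two below `R / 2`, coprimality gives
`q = 2 ^ t * V + R * W` with `1 ≤ V ≤ R` and `W ≥ 1` whenever `2 ^ t * R < q`; then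
`2 * q = 2 ^ (t + 1) * V + 2 * R * W` is a sum of two practical numbers if moreover
`q ≤ R * (σ(2 * R) + 1)`. As `σ(2 * 3 ^ j) ≈ 9 * 3 ^ j / 2`, these ranges of `q` for consecutive
`j` overlap, and together they cover all `q ≥ 4`. -/

open Finset ArithmeticFunction
open scoped ArithmeticFunction.sigma

theorem Finset.exists_subset_sum_eq_of_forall_le_one_add_sum_lt (D : Finset ℕ)
    (hD : ∀ d ∈ D, d ≤ 1 + ∑ e ∈ D with e < d, e) {r : ℕ} (hr : r ≤ ∑ d ∈ D, d) :
    ∃ s ⊆ D, ∑ d ∈ s, d = r := by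
  induction D using Finset.induction_on_max generalizing r with
  | empty => exact ⟨∅, empty_subset _, by simp_all⟩
  | insert a D ha ih =>
    have haD : a ∉ D := fun h => lt_irrefl a (ha a h)
    have hD' (d : ℕ) (hd : d ∈ D) : d ≤ 1 + ∑ e ∈ D with e < d, e := by
      have h := hD d (mem_insert_of_mem hd)
      rwa [filter_insert, if_neg (ha d hd).not_gt] at h
    have ha_le : a ≤ 1 + ∑ e ∈ D, e := by
      have h := hD a (mem_insert_self a D)
      rwa [filter_insert, if_neg (lt_irrefl a), filter_true_of_mem ha] at h
    rw [sum_insert haD] at hr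
    by_cases hrD : r ≤ ∑ e ∈ D, e
    · obtain ⟨s, hs, hsum⟩ := ih hD' hrD
      exact ⟨s, hs.trans (subset_insert a D), hsum⟩
    · obtain ⟨s, hs, hsum⟩ := ih hD' (r := r - a) (by omega)
      refine ⟨insert a s, insert_subset_insert a hs, ?_⟩
      rw [sum_insert (fun h => haD (hs h)), hsum]
      omega

theorem le_sigma_one {n : ℕ} (hn : n ≠ 0) : n ≤ σ 1 n := by
  rw [sigma_one_apply]
  exact single_le_sum (f := fun d => d) (fun _ _ => Nat.zero_le _) (Nat.mem_divisors_self n hn)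

theorem sigma_one_prime_pow_mul_sub_one_add_one {p : ℕ} (hp : p.Prime) (i : ℕ) :
    σ 1 (p ^ i) * (p - 1) + 1 = p ^ (i + 1) := by
  have h := geom_sum_mul_add (p - 1) (i + 1)
  rwa [Nat.sub_add_cancel hp.one_le, ← sigma_one_apply_prime_pow hp] at h

theorem sigma_one_two_mul_of_odd {R : ℕ} (hR : Odd R) : σ 1 (2 * R) = 3 * σ 1 R := by
  rw [isMultiplicative_sigma.map_mul_of_coprime (Nat.coprime_two_left.2 hR)]
  rfl

namespace Practical

variable {m n k r : ℕ}

theorem exists_subset_sum_eq_of_le (hn : Practical n) (hr : r ≤ n) :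
    ∃ s ⊆ n.divisors, ∑ d ∈ s, d = r := by
  obtain rfl | hr0 := Nat.eq_zero_or_pos r
  · exact ⟨∅, empty_subset _, sum_empty⟩
  · exact hn.2 r hr0 hr

theorem exists_subset_sum_eq (hn : Practical n) (hr : r ≤ σ 1 n) :
    ∃ s ⊆ n.divisors, ∑ d ∈ s, d = r := by
  rw [sigma_one_apply] at hr
  refine exists_subset_sum_eq_of_forall_le_one_add_sum_lt _ (fun d hd => ?_) hr
  have hd0 := Nat.pos_of_mem_divisors hd
  obtain ⟨s, hs, hsum⟩ :=
    hn.exists_subset_sum_eq_of_le ((Nat.sub_le d 1).trans (Nat.divisor_le hd))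
  have hs_lt : s ⊆ {e ∈ n.divisors | e < d} := fun e he => by
    have := single_le_sum (f := fun d => d) (fun _ _ => Nat.zero_le _) he
    exact mem_filter.2 ⟨hs he, by omega⟩
  have := sum_le_sum_of_subset (f := fun e => e) hs_lt
  omega

/-- Write `t = (t / k) * k + t % k`: represent `t / k ≤ m` by divisors `b` of `m`, which give
divisors `b * k ≥ k` of `m * k`, and `t % k < k` by divisors of `m`, which are all `< k`. -/
theorem mul_s8 (hm : Practical m) (hk : 0 < k) (hkm : k ≤ σ 1 m + 1) : Practical (m * k) := by
  have hmk : m * k ≠ 0 := (Nat.mul_pos hm.1 hk).ne'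
  refine ⟨Nat.pos_of_ne_zero hmk, fun t _ ht => ?_⟩
  have hmod := Nat.mod_lt t hk
  obtain ⟨A, hA, hAsum⟩ := hm.exists_subset_sum_eq (r := t % k) (by omega)
  obtain ⟨B, hB, hBsum⟩ :=
    hm.exists_subset_sum_eq_of_le (r := t / k) (Nat.div_le_of_le_mul (by rwa [mul_comm]))
  have hA_lt (a : ℕ) (ha : a ∈ A) : a < k :=
    (single_le_sum (f := fun d => d) (fun _ _ => Nat.zero_le _) ha).trans_lt (hAsum ▸ hmod)
  have hB_ge (c : ℕ) (hc : c ∈ B.image (· * k)) : k ≤ c := by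
    obtain ⟨b, hb, rfl⟩ := mem_image.1 hc
    exact Nat.le_mul_of_pos_left k (Nat.pos_of_mem_divisors (hB hb))
  refine ⟨A ∪ B.image (· * k), union_subset ?_ ?_, ?_⟩
  · exact hA.trans (Nat.divisors_subset_of_dvd hmk (dvd_mul_right m k))
  · intro c hc
    obtain ⟨b, hb, rfl⟩ := mem_image.1 hc
    exact Nat.mem_divisors.2 ⟨mul_dvd_mul_right (Nat.dvd_of_mem_divisors (hB hb)) k, hmk⟩
  · rw [sum_union (disjoint_left.2 fun c hcA hcB => (hA_lt c hcA).not_ge (hB_ge c hcB)),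
      sum_image (fun x _ y _ h => Nat.eq_of_mul_eq_mul_right hk h), ← sum_mul, hAsum, hBsum,
      Nat.mod_add_div']

theorem mul_of_le_succ (hm : Practical m) (hk : 0 < k) (hkm : k ≤ m + 1) : Practical (m * k) :=
  hm.mul_s8 hk (hkm.trans (Nat.succ_le_succ (le_sigma_one hm.1.ne')))

end Practical

theorem practical_one : Practical 1 :=
  ⟨one_pos, fun m h1 h2 => ⟨{1}, by simp, by simp; omega⟩⟩

theorem practical_two_pow (a : ℕ) : Practical (2 ^ a) := by
  induction a with
  | zero => exact practical_one
  | succ a ih =>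
    rw [pow_succ]
    exact ih.mul_of_le_succ two_pos (by have := Nat.one_le_two_pow (n := a); omega)

theorem practical_two_pow_mul {a m : ℕ} (hm : 0 < m) (h : m ≤ 2 ^ (a + 1)) :
    Practical (2 ^ a * m) := by
  have hσ := sigma_one_prime_pow_mul_sub_one_add_one Nat.prime_two a
  norm_num at hσ
  exact (practical_two_pow a).mul_s8 hm (by omega)

theorem practical_two_mul_three_pow (j : ℕ) : Practical (2 * 3 ^ j) := by
  induction j with
  | zero => simpa using practical_two_pow 1
  | succ j ih =>
    rw [pow_succ, ← mul_assoc]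
    exact ih.mul_of_le_succ three_pos (by have := Nat.one_le_pow j 3 three_pos; omega)

theorem Nat.exists_eq_mul_add_mul_of_coprime_of_mul_lt {T R q : ℕ} (hTR : T.Coprime R)
    (hT : 0 < T) (hR : 0 < R) (hq : T * R < q) :
    ∃ V W, 0 < V ∧ V ≤ R ∧ 0 < W ∧ q = T * V + R * W := by
  have hTq : T ≤ q := (Nat.le_mul_of_pos_right T hR).trans hq.le
  -- `k ≡ 0 [MOD T]`, `k ≡ q - T [MOD R]`, `k < T * R`, so `k + T = T * V` with `1 ≤ V ≤ R`
  let k := Nat.chineseRemainder hTR 0 (q - T)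
  obtain ⟨c, hc⟩ := Nat.modEq_zero_iff_dvd.1 k.2.1
  have hcR : c < R := by
    have := Nat.chineseRemainder_lt_mul hTR 0 (q - T) hT.ne' hR.ne'
    rw [hc] at this
    exact Nat.lt_of_mul_lt_mul_left this
  have hTV : T * (c + 1) ≤ T * R := Nat.mul_le_mul_left T hcR
  have hmod : T * (c + 1) ≡ q [MOD R] := by
    have := k.2.2.add_right T
    rwa [hc, ← mul_add_one, Nat.sub_add_cancel hTq] at this
  obtain ⟨W, hW⟩ := (Nat.modEq_iff_dvd' (by omega)).1 hmod
  refine ⟨c + 1, W, c.succ_pos, hcR, Nat.pos_of_ne_zero ?_, by omega⟩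
  rintro rfl
  omega

theorem exists_practical_add_practical_eq_two_mul {R t q : ℕ} (hR : Odd R)
    (hP : Practical (2 * R)) (hRt : R ≤ 2 ^ (t + 2)) (hlo : 2 ^ t * R < q)
    (hhi : q ≤ R * (σ 1 (2 * R) + 1)) :
    ∃ a b, Practical a ∧ Practical b ∧ 2 * q = a + b := by
  obtain ⟨V, W, hV, hVR, hW, rfl⟩ := Nat.exists_eq_mul_add_mul_of_coprime_of_mul_lt
    (Nat.Coprime.pow_left t (Nat.coprime_two_left.2 hR)) (by positivity) hR.pos hlo
  refine ⟨2 ^ (t + 1) * V, 2 * R * W, practical_two_pow_mul hV (hVR.trans hRt), hP.mul_s8 hW ?_,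
    by ring⟩
  exact Nat.le_of_mul_le_mul_left (le_of_add_le_right hhi) hR.pos

theorem exists_two_pow_succ_lt_le {R : ℕ} (hR : 3 ≤ R) :
    ∃ t, 2 ^ (t + 1) < R ∧ R ≤ 2 ^ (t + 2) := by
  have hL : 1 ≤ Nat.log 2 (R - 1) := Nat.le_log_of_pow_le one_lt_two (by omega)
  have hlo := Nat.pow_log_le_self 2 (x := R - 1) (by omega)
  have hhi := Nat.lt_pow_succ_log_self one_lt_two (R - 1)
  refine ⟨Nat.log 2 (R - 1) - 1, ?_, ?_⟩
  · rw [Nat.sub_add_cancel hL]; omega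
  · rw [show Nat.log 2 (R - 1) - 1 + 2 = (Nat.log 2 (R - 1)).succ by omega]; omega

theorem two_pow_mul_three_pow_succ_le {j t : ℕ} (ht : 2 ^ (t + 1) < 3 ^ (j + 1)) :
    2 ^ t * 3 ^ (j + 1) ≤ 3 ^ j * (σ 1 (2 * 3 ^ j) + 1) := by
  have hσ := sigma_one_prime_pow_mul_sub_one_add_one Nat.prime_three j
  rw [sigma_one_two_mul_of_odd (Odd.pow (by decide))]
  have h2t : 2 ^ t ≤ σ 1 (3 ^ j) := by rw [pow_succ] at ht; omega
  calc 2 ^ t * 3 ^ (j + 1) = 3 ^ j * (3 * 2 ^ t) := by ring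
    _ ≤ 3 ^ j * (3 * σ 1 (3 ^ j) + 1) := by gcongr; omega

theorem exists_practical_add_practical_eq_two_mul_of_le {q : ℕ} (hq : 4 ≤ q) (j : ℕ)
    (hqj : q ≤ 3 ^ (j + 1) * (σ 1 (2 * 3 ^ (j + 1)) + 1)) :
    ∃ a b, Practical a ∧ Practical b ∧ 2 * q = a + b := by
  induction j with
  | zero =>
    exact exists_practical_add_practical_eq_two_mul (t := 0) (by decide)
      (practical_two_mul_three_pow 1) (by norm_num) (by omega) hqj
  | succ j ih =>
    by_cases hprev : q ≤ 3 ^ (j + 1) * (σ 1 (2 * 3 ^ (j + 1)) + 1)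
    · exact ih hprev
    obtain ⟨t, ht, hRt⟩ := exists_two_pow_succ_lt_le (R := 3 ^ (j + 2))
      (Nat.le_self_pow (by omega) 3)
    exact exists_practical_add_practical_eq_two_mul (Odd.pow (by decide))
      (practical_two_mul_three_pow _) hRt
      ((two_pow_mul_three_pow_succ_le ht).trans_lt (not_le.1 hprev)) hqj

/-- Melfi: every even positive integer is the sum of two practical numbers. -/
theorem even_eq_add_practical (n : ℕ) (hn : 0 < n) (h2 : 2 ∣ n) :
    ∃ a b : ℕ, Practical a ∧ Practical b ∧ n = a + b := by
  obtain ⟨q, rfl⟩ := h2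
  obtain hq | hq := lt_or_ge q 4
  · have hq0 : 0 < q := by omega
    have practical_two : Practical 2 := by simpa using practical_two_pow 1
    have practical_four : Practical 4 := by simpa using practical_two_pow 2
    interval_cases q
    · exact ⟨1, 1, practical_one, practical_one, rfl⟩
    · exact ⟨2, 2, practical_two, practical_two, rfl⟩
    · exact ⟨2, 4, practical_two, practical_four, rfl⟩
  · refine exists_practical_add_practical_eq_two_mul_of_le hq q ?_
    calc q ≤ 3 ^ (q + 1) := (Nat.lt_pow_self (n := q + 1) (by norm_num)).le.trans' q.le_succ
      _ ≤ _ := Nat.le_mul_of_pos_right _ (Nat.succ_pos _)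
end

section
/- If q is a practical number, m is a positive integer, and every prime factor of m is at most q, then qm is practical. -/
/-- Representation allowing `0`, with the bound that every used divisor is `≤ c`. -/
lemma practical_rep (n : ℕ) (hn : Practical n) (c : ℕ) (hc : c ≤ n) :
    ∃ s ⊆ n.divisors, ∑ d ∈ s, d = c ∧ ∀ d ∈ s, d ≤ c := by
  rcases Nat.eq_zero_or_pos c with rfl | hc1
  · exact ⟨∅, by simp, by simp, by simp⟩
  · obtain ⟨s, hs, hsum⟩ := hn.2 c hc1 hc
    refine ⟨s, hs, hsum, fun d hd => ?_⟩
    rw [← hsum]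
    exact Finset.single_le_sum (fun i _ => Nat.zero_le i) hd

/-- Key lemma: if `n` is practical and `1 ≤ k ≤ n + 1` then `n * k` is practical. -/
lemma practical_mul_le (n k : ℕ) (hn : Practical n) (hk : 0 < k) (hkn : k ≤ n + 1) :
    Practical (n * k) := by
  refine ⟨Nat.mul_pos hn.1 hk, fun m hm1 hmnk => ?_⟩
  -- write m = (m / k) * k + m % k
  have hb : m / k ≤ n := by
    have := Nat.div_le_div_right (c := k) hmnk
    rwa [Nat.mul_div_cancel _ hk] at this
  have hck : m % k < k := Nat.mod_lt _ hk
  have hcn : m % k ≤ n := by omega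
  obtain ⟨S, hS, hSsum, -⟩ := practical_rep n hn (m / k) hb
  obtain ⟨T, hT, hTsum, hTle⟩ := practical_rep n hn (m % k) hcn
  -- the big part: divisors d*k for d ∈ S
  set S' : Finset ℕ := S.image (· * k) with hS'def
  have hinj : Set.InjOn (· * k) S := fun a _ b _ hab => Nat.eq_of_mul_eq_mul_right hk hab
  have hS'sum : ∑ d ∈ S', d = (m / k) * k := by
    rw [hS'def, Finset.sum_image hinj, ← Finset.sum_mul, hSsum]
  have hdisj : Disjoint S' T := by
    rw [Finset.disjoint_left]
    rintro a ha haT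
    obtain ⟨d, hd, rfl⟩ := Finset.mem_image.mp ha
    have hd1 : 1 ≤ d := (Nat.one_le_iff_ne_zero.mpr (Nat.pos_of_mem_divisors (hS hd)).ne')
    have : d * k ≤ m % k := hTle _ haT
    nlinarith
  have hnk0 : n * k ≠ 0 := (Nat.mul_pos hn.1 hk).ne'
  refine ⟨S' ∪ T, ?_, ?_⟩
  · intro a ha
    rcases Finset.mem_union.mp ha with ha | ha
    · obtain ⟨d, hd, rfl⟩ := Finset.mem_image.mp ha
      exact Nat.mem_divisors.mpr ⟨mul_dvd_mul (Nat.dvd_of_mem_divisors (hS hd)) dvd_rfl, hnk0⟩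
    · exact Nat.divisors_subset_of_dvd hnk0 (Dvd.intro k rfl) (hT ha)
  · rw [Finset.sum_union hdisj, hS'sum, hTsum, Nat.div_add_mod']

/-- If `q` is practical, `m ≥ 1`, and every prime factor of `m` is at most `q`,
then `q * m` is practical. -/
theorem practical_mul_of_primes_le (q m : ℕ) (hq : Practical q) (hm : 0 < m)
    (h : ∀ p : ℕ, p.Prime → p ∣ m → p ≤ q) : Practical (q * m) := by
  induction m using Nat.strong_induction_on with
  | _ m ih =>
    rcases eq_or_ne m 1 with rfl | hm1
    · simpa using hq
    · obtain ⟨p, hp, hpm⟩ := Nat.exists_prime_and_dvd hm1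
      obtain ⟨m', rfl⟩ := hpm
      have hm' : 0 < m' := Nat.pos_of_ne_zero (by rintro rfl; simp at hm)
      have hlt : m' < p * m' := by nlinarith [hp.two_le]
      have hrec : Practical (q * m') :=
        ih m' hlt hm' (fun r hr hrd => h r hr (hrd.mul_left p))
      have hpq : p ≤ q := h p hp (dvd_mul_right p m')
      have hqle : q ≤ q * m' := Nat.le_mul_of_pos_right q hm'
      have := practical_mul_le (q * m') p hrec hp.pos (by omega)
      have heq : q * m' * p = q * (p * m') := by ring
      rwa [heq] at this
end

section
/- There exists a constant c > 0 such that for all real x ≥ 3 and all real z with 1 < z < 3, ∑_{n ≤ x} z^{Ω₃(n)} / φ(n) ≤ (c / (3 − z)) · (log x)^z, where Ω₃(n) denotes the number of odd prime factors of n counted with multiplicity. -/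
/-!
With `f n = z ^ Ω₃(n) / φ(n)`, which is multiplicative and nonnegative, the sum is at most
the Euler product `∏_{p ≤ x} ∑_k f(p^k)`. Each factor is a geometric series: the one at `2`
is `3`, the one at `3` is `(6 + z) / (2 (3 - z))`, which is where `1 / (3 - z)` comes from,
and the one at `p ≥ 5` is at most `exp (z / p + 40 / p²)`. The bound
`∑_{p ≤ x} 1/p ≤ log log x + 4`, obtained by partial summation from
`∑_{p ≤ x} log p / p ≤ log x + log 4` (Legendre's formula for `n!` and `θ(x) ≤ x log 4`),
then bounds the product over `p ≥ 5` by `e⁵² (log x) ^ z`.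
-/

open Finset

/-- The number of odd prime factors of `n`, counted with multiplicity. -/
def Omega3 (n : ℕ) : ℕ := (n / 2 ^ n.factorization 2).primeFactorsList.length

open Real
open scoped Nat

lemma Omega3_eq_cardFactors (n : ℕ) : Omega3 n = ArithmeticFunction.cardFactors (ordCompl[2] n) :=
  ArithmeticFunction.cardFactors_apply.symm

lemma Omega3_mul {m n : ℕ} (hm : m ≠ 0) (hn : n ≠ 0) :
    Omega3 (m * n) = Omega3 m + Omega3 n := by
  simp only [Omega3_eq_cardFactors, Nat.ordCompl_mul]
  exact ArithmeticFunction.cardFactors_mul (Nat.ordCompl_pos 2 hm).ne' (Nat.ordCompl_pos 2 hn).ne'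

lemma Omega3_pow {n : ℕ} (hn : n ≠ 0) (k : ℕ) : Omega3 (n ^ k) = k * Omega3 n := by
  induction k with
  | zero => simp [Omega3]
  | succ k ih => rw [pow_succ, Omega3_mul (pow_ne_zero k hn) hn, ih, Nat.succ_mul]

lemma Omega3_two : Omega3 2 = 0 := by
  simp [Omega3, Nat.prime_two.factorization_self]

lemma Omega3_prime {p : ℕ} (hp : p.Prime) (hp2 : p ≠ 2) : Omega3 p = 1 := by
  rw [Omega3_eq_cardFactors, Nat.factorization_eq_zero_of_not_dvd, pow_zero, Nat.div_one,
    ArithmeticFunction.cardFactors_apply_prime hp]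
  exact fun h ↦ hp2 ((Nat.prime_dvd_prime_iff_eq Nat.prime_two hp).mp h).symm

lemma pow_Omega3_lt {z : ℝ} (hz3 : z < 3) {p : ℕ} (hp : p.Prime) : z ^ Omega3 p < p := by
  rcases eq_or_ne p 2 with rfl | hp2
  · simp [Omega3_two]
  · have hp3 : (3 : ℝ) ≤ p := mod_cast (show 3 ≤ p by have := hp.two_le; omega)
    rw [Omega3_prime hp hp2, pow_one]
    linarith

noncomputable def omega3Weight (z : ℝ) (n : ℕ) : ℝ := z ^ Omega3 n / n.totient

lemma omega3Weight_nonneg {z : ℝ} (hz : 0 ≤ z) (n : ℕ) : 0 ≤ omega3Weight z n := by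
  unfold omega3Weight; positivity

lemma omega3Weight_one (z : ℝ) : omega3Weight z 1 = 1 := by
  simp [omega3Weight, Omega3]

lemma omega3Weight_mul (z : ℝ) {m n : ℕ} (h : m.Coprime n) :
    omega3Weight z (m * n) = omega3Weight z m * omega3Weight z n := by
  rcases eq_or_ne m 0 with rfl | hm
  · simp [omega3Weight]
  rcases eq_or_ne n 0 with rfl | hn
  · simp [omega3Weight]
  rw [omega3Weight, omega3Weight, omega3Weight, Omega3_mul hm hn, Nat.totient_mul h, pow_add,
    Nat.cast_mul, mul_div_mul_comm]

lemma omega3Weight_prime_pow_succ (z : ℝ) {p : ℕ} (hp : p.Prime) (k : ℕ) :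
    omega3Weight z (p ^ (k + 1)) =
      z ^ Omega3 p / (p - 1) * (z ^ Omega3 p / p) ^ k := by
  have hp1 : (1 : ℝ) < p := mod_cast hp.one_lt
  rw [omega3Weight, Omega3_pow hp.ne_zero, Nat.totient_prime_pow_succ hp,
    Nat.cast_mul, Nat.cast_pow, Nat.cast_sub hp.one_le, Nat.cast_one, mul_comm (k + 1), pow_mul,
    pow_succ, div_pow]
  field_simp

lemma hasSum_omega3Weight_prime_pow {z : ℝ} (hz : 0 ≤ z) {p : ℕ} (hp : p.Prime)
    (hzp : z ^ Omega3 p < p) :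
    HasSum (fun k ↦ omega3Weight z (p ^ k))
      (1 + z ^ Omega3 p / (p - 1) * (1 - z ^ Omega3 p / p)⁻¹) := by
  have hp0 : (0 : ℝ) < p := mod_cast hp.pos
  have hr : z ^ Omega3 p / p < 1 := (div_lt_one hp0).mpr hzp
  refine (hasSum_nat_add_iff' 1).mp ?_
  simp only [range_one, sum_singleton, pow_zero, omega3Weight_one, add_sub_cancel_left,
    omega3Weight_prime_pow_succ z hp]
  exact (hasSum_geometric_of_lt_one (by positivity) hr).mul_left _

lemma tsum_omega3Weight_two_pow {z : ℝ} (hz : 0 ≤ z) :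
    ∑' k, omega3Weight z (2 ^ k) = 3 := by
  rw [(hasSum_omega3Weight_prime_pow hz Nat.prime_two (by simp [Omega3_two])).tsum_eq,
    Omega3_two]
  norm_num

lemma tsum_omega3Weight_three_pow_le {z : ℝ} (hz0 : 0 ≤ z) (hz3 : z < 3) :
    ∑' k, omega3Weight z (3 ^ k) ≤ 9 / 2 / (3 - z) := by
  have h3 : Omega3 3 = 1 := Omega3_prime Nat.prime_three (by norm_num)
  have h3z : 0 < 3 - z := by linarith
  have hval : 1 + z / ((3 : ℕ) - 1) * (1 - z / (3 : ℕ))⁻¹ = (6 + z) / 2 / (3 - z) := by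
    push_cast
    field_simp
    ring
  rw [(hasSum_omega3Weight_prime_pow hz0 Nat.prime_three
    (pow_Omega3_lt hz3 Nat.prime_three)).tsum_eq, h3, pow_one, hval]
  gcongr
  linarith

lemma tsum_omega3Weight_prime_pow_le_exp {z : ℝ} (hz0 : 0 ≤ z) (hz3 : z < 3) {p : ℕ}
    (hp : p.Prime) (hp5 : 5 ≤ p) :
    ∑' k, omega3Weight z (p ^ k) ≤ exp (z / p + 40 / p ^ 2) := by
  have hP : (5 : ℝ) ≤ p := mod_cast hp5
  have h1 : Omega3 p = 1 := Omega3_prime hp (by omega)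
  rw [(hasSum_omega3Weight_prime_pow hz0 hp (pow_Omega3_lt hz3 hp)).tsum_eq, h1, pow_one]
  refine le_trans ?_ (add_one_le_exp _)
  -- `z p / ((p - 1) (p - z)) - z / p = z ((1 + z) p - z) / (p (p - 1) (p - z)) ≤ 37.5 / p²`
  have hPz : 0 < (p : ℝ) - z := by linarith
  rw [one_sub_div (by positivity), inv_div, div_mul_div_comm, add_comm (_ + _),
    add_le_add_iff_left, div_add_div _ _ (by positivity) (by positivity),
    div_le_div_iff₀ (by nlinarith) (by positivity)]
  nlinarith [mul_nonneg (mul_nonneg hz0 (sub_nonneg.2 hP)) (sub_nonneg.2 hz3.le),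
    mul_nonneg (sub_nonneg.2 hP) (sub_nonneg.2 hz3.le), mul_nonneg hz0 (sub_nonneg.2 hP),
    mul_nonneg (mul_nonneg (sub_nonneg.2 hP) (sub_nonneg.2 hP)) (sub_nonneg.2 hz3.le)]

lemma sum_Icc_le_prod_primesLE_tsum {f : ℕ → ℝ} (hf₀ : ∀ n, 0 ≤ f n) (hf₁ : f 1 = 1)
    (hmul : ∀ {m n : ℕ}, m.Coprime n → f (m * n) = f m * f n)
    (hsum : ∀ {p : ℕ}, p.Prime → Summable (fun k ↦ f (p ^ k))) (N : ℕ) :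
    ∑ n ∈ Icc 1 N, f n ≤ ∏ p ∈ Nat.primesLE N, ∑' k, f (p ^ k) := by
  have hnorm : ∀ {p : ℕ}, p.Prime → Summable (fun k ↦ ‖f (p ^ k)‖) := fun hp ↦
    (hsum hp).congr fun k ↦ (Real.norm_of_nonneg (hf₀ _)).symm
  have hEuler := (EulerProduct.summable_and_hasSum_smoothNumbers_prod_primesBelow_tsum
    hf₁ hmul hnorm (N + 1)).2
  have hsmooth : ∀ n ∈ Icc 1 N, n ∈ (N + 1).smoothNumbers := fun n hn ↦ by
    rw [mem_Icc] at hn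
    exact Nat.mem_smoothNumbers_of_lt (by omega) (by omega)
  rw [Nat.primesLE, ← filter_true_of_mem hsmooth, ← sum_subtype_eq_sum_filter]
  exact sum_le_hasSum _ (fun m _ ↦ hf₀ m) hEuler

lemma div_le_factorization_factorial {p n : ℕ} (hp : p.Prime) (hpn : p ≤ n) :
    n / p ≤ (n !).factorization p := by
  rw [Nat.factorization_factorial hp (Nat.lt_succ_self _)]
  have h1 : 1 ∈ Ico 1 (Nat.log p n + 1) := by simp [Nat.log_pos hp.one_lt hpn]
  simpa using single_le_sum (f := fun i ↦ n / p ^ i) (fun _ _ ↦ Nat.zero_le _) h1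

lemma sum_primesLE_div_mul_log_le_log_factorial (n : ℕ) :
    ∑ p ∈ Nat.primesLE n, ((n / p : ℕ) : ℝ) * log p ≤ log (n ! : ℕ) := by
  rw [log_nat_eq_sum_factorization, Finsupp.sum]
  calc ∑ p ∈ Nat.primesLE n, ((n / p : ℕ) : ℝ) * log p
      ≤ ∑ p ∈ Nat.primesLE n, ((n !).factorization p : ℝ) * log p := by
        refine sum_le_sum fun p hp ↦ ?_
        have hp' := Nat.mem_primesLE.mp hp
        gcongr
        exact div_le_factorization_factorial hp'.2 hp'.1
    _ ≤ ∑ p ∈ (n !).factorization.support, ((n !).factorization p : ℝ) * log p := by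
        refine sum_le_sum_of_subset_of_nonneg (fun p hp ↦ ?_) fun p _ _ ↦ ?_
        · have hp' := Nat.mem_primesLE.mp hp
          rw [Nat.support_factorization, Nat.mem_primeFactors]
          exact ⟨hp'.2, hp'.2.dvd_factorial.mpr hp'.1, Nat.factorial_ne_zero n⟩
        · exact mul_nonneg (Nat.cast_nonneg _) (log_natCast_nonneg p)

lemma sum_primesLE_log_div_le {n : ℕ} (hn : 1 ≤ n) :
    ∑ p ∈ Nat.primesLE n, log p / p ≤ log n + log 4 := by
  have hn0 : (0 : ℝ) < n := mod_cast hn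
  rw [← mul_le_mul_iff_right₀ hn0, mul_sum]
  have hterm : ∀ p ∈ Nat.primesLE n,
      (n : ℝ) * (log p / p) ≤ ((n / p : ℕ) : ℝ) * log p + log p := by
    intro p hp
    have hp := Nat.prime_of_mem_primesLE hp
    have hp0 : (0 : ℝ) < p := mod_cast hp.pos
    have hdiv : (n : ℝ) / p ≤ ((n / p : ℕ) : ℝ) + 1 := by
      rw [div_le_iff₀ hp0]
      have : n < p * (n / p + 1) := Nat.lt_mul_div_succ n hp.pos
      exact_mod_cast this.le.trans_eq (mul_comm _ _)
    calc (n : ℝ) * (log p / p) = (n / p) * log p := by ring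
      _ ≤ (((n / p : ℕ) : ℝ) + 1) * log p := by
        gcongr
      _ = _ := by ring
  calc ∑ p ∈ Nat.primesLE n, (n : ℝ) * (log p / p)
      ≤ ∑ p ∈ Nat.primesLE n, (((n / p : ℕ) : ℝ) * log p + log p) := sum_le_sum hterm
    _ ≤ log (n ! : ℕ) + n * log 4 := by
      rw [sum_add_distrib, ← Chebyshev.theta_eq_sum_primesLE_log]
      gcongr
      · exact sum_primesLE_div_mul_log_le_log_factorial n
      · linarith [Chebyshev.theta_le_log4_mul_x hn0.le]
    _ ≤ log ((n : ℝ) ^ n) + n * log 4 := by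
      gcongr
      exact_mod_cast Nat.factorial_le_pow n
    _ = n * (log n + log 4) := by rw [log_pow]; ring

/-- Partial summation, as an induction on `n`: the second summand is the normalized slack in
`sum_primesLE_log_div_le`, and its increments are absorbed by those of `log (log n)`. -/
lemma sum_primesLE_inv_add_le {n : ℕ} (hn : 2 ≤ n) :
    ∑ p ∈ Nat.primesLE n, (p : ℝ)⁻¹
      + (log n + log 4 - ∑ p ∈ Nat.primesLE n, log p / p) / log n ≤ log (log n) + 4 := by
  induction n, hn using Nat.le_induction with
  | base =>
    have hprimes : Nat.primesLE 2 = {2} := by decide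
    have hlog2 : 0 < log 2 := log_pos one_lt_two
    have hloglog2 : -1 ≤ log (log 2) := by
      rw [le_log_iff_exp_le hlog2, exp_neg, inv_le_comm₀ (exp_pos 1) hlog2]
      have := exp_one_gt_d9
      have := (inv_le_comm₀ hlog2 two_pos).2 (by linarith [log_two_gt_d9])
      linarith
    have hlog4 : log 4 = 2 * log 2 := by
      rw [show (4 : ℝ) = 2 ^ 2 by norm_num, log_pow, Nat.cast_ofNat]
    rw [hprimes, sum_singleton, sum_singleton, hlog4, Nat.cast_ofNat]
    field_simp
    linarith
  | succ n hn ih =>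
    set S := ∑ p ∈ Nat.primesLE n, (p : ℝ)⁻¹
    set A := ∑ p ∈ Nat.primesLE n, log p / p
    set A' := ∑ p ∈ Nat.primesLE (n + 1), log p / p
    set L := log n
    set L' := log (n + 1 : ℕ)
    have hL : 0 < L := log_pos (mod_cast hn)
    have hL' : 0 < L' := log_pos (mod_cast (by omega : 1 < n + 1))
    have hLL' : L ≤ L' := log_le_log (by positivity) (mod_cast n.le_succ)
    have hstep : ∑ p ∈ Nat.primesLE (n + 1), (p : ℝ)⁻¹ = S + (A' - A) / L' := by
      simp only [A', S, A, Nat.primesLE_succ]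
      split_ifs
      · rw [sum_insert (Nat.notMem_primesLE n), sum_insert (Nat.notMem_primesLE n),
          add_sub_cancel_right, div_div, mul_comm, ← div_div, div_self hL'.ne', one_div]
        ring
      · simp
    have hA : A - log 4 ≤ L := by linarith [sum_primesLE_log_div_le (by omega : 1 ≤ n)]
    have hdiff :
        (L' + log 4 - A) / L' - (L + log 4 - A) / L = (A - log 4) * (L⁻¹ - L'⁻¹) := by
      field_simp
      ring
    have hcorr : (A - log 4) * (L⁻¹ - L'⁻¹) ≤ 1 - L / L' := by
      calc (A - log 4) * (L⁻¹ - L'⁻¹) ≤ L * (L⁻¹ - L'⁻¹) := by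
            gcongr
            exact sub_nonneg.2 (inv_anti₀ hL hLL')
        _ = 1 - L / L' := by field_simp
    have hlog : 1 - L / L' ≤ log L' - log L := by
      have := log_le_sub_one_of_pos (div_pos hL hL')
      rw [log_div hL.ne' hL'.ne'] at this
      linarith
    have hsum : (A' - A) / L' + (L' + log 4 - A') / L' = (L' + log 4 - A) / L' := by ring
    rw [hstep]
    linarith

lemma sum_primesLE_inv_le {n : ℕ} (hn : 2 ≤ n) :
    ∑ p ∈ Nat.primesLE n, (p : ℝ)⁻¹ ≤ log (log n) + 4 := by
  have hcorr : 0 ≤ (log n + log 4 - ∑ p ∈ Nat.primesLE n, log p / p) / log n := by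
    have := sum_primesLE_log_div_le (by omega : 1 ≤ n)
    exact div_nonneg (by linarith) (log_natCast_nonneg n)
  linarith [sum_primesLE_inv_add_le hn]

lemma sum_primesLE_inv_sq_le_one (n : ℕ) :
    ∑ p ∈ Nat.primesLE n, ((p : ℝ) ^ 2)⁻¹ ≤ 1 := by
  have hsub : Nat.primesLE n ⊆ Ioc 1 (n + 1) := fun p hp ↦
    mem_Ioc.2 ⟨Nat.one_lt_of_mem_primesLE hp, (Nat.le_of_mem_primesLE hp).trans n.le_succ⟩
  calc ∑ p ∈ Nat.primesLE n, ((p : ℝ) ^ 2)⁻¹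
      ≤ ∑ p ∈ Ioc 1 (n + 1), ((p : ℝ) ^ 2)⁻¹ :=
        sum_le_sum_of_subset_of_nonneg hsub fun _ _ _ ↦ by positivity
    _ ≤ ((1 : ℕ) : ℝ)⁻¹ - ((n + 1 : ℕ) : ℝ)⁻¹ :=
        sum_Ioc_inv_sq_le_sub one_ne_zero (by omega)
    _ ≤ 1 := by
      rw [Nat.cast_one, inv_one]
      linarith [inv_nonneg.2 (Nat.cast_nonneg (α := ℝ) (n + 1))]

lemma prod_tsum_omega3Weight_le_of_five_le {z : ℝ} (hz0 : 0 ≤ z) (hz3 : z < 3) {N : ℕ}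
    (hN : 2 ≤ N) {s : Finset ℕ} (hs : s ⊆ Nat.primesLE N) (hs5 : ∀ p ∈ s, 5 ≤ p) :
    ∏ p ∈ s, ∑' k, omega3Weight z (p ^ k) ≤ exp 52 * log N ^ z := by
  have hsum_inv : ∑ p ∈ s, (p : ℝ)⁻¹ ≤ log (log N) + 4 :=
    (sum_le_sum_of_subset_of_nonneg hs fun _ _ _ ↦ by positivity).trans (sum_primesLE_inv_le hN)
  have hsum_inv_sq : ∑ p ∈ s, ((p : ℝ) ^ 2)⁻¹ ≤ 1 :=
    (sum_le_sum_of_subset_of_nonneg hs fun _ _ _ ↦ by positivity).trans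
      (sum_primesLE_inv_sq_le_one N)
  have hlogN : 0 < log N := log_pos (mod_cast hN)
  calc ∏ p ∈ s, ∑' k, omega3Weight z (p ^ k)
      ≤ ∏ p ∈ s, exp (z / p + 40 / p ^ 2) :=
        prod_le_prod (fun p _ ↦ tsum_nonneg fun k ↦ omega3Weight_nonneg hz0 _) fun p hp ↦
          tsum_omega3Weight_prime_pow_le_exp hz0 hz3
            (Nat.prime_of_mem_primesLE (hs hp)) (hs5 p hp)
    _ = exp (z * ∑ p ∈ s, (p : ℝ)⁻¹ + 40 * ∑ p ∈ s, ((p : ℝ) ^ 2)⁻¹) := by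
        rw [← exp_sum, mul_sum, mul_sum, ← sum_add_distrib]
        simp only [div_eq_mul_inv]
    _ ≤ exp (52 + z * log (log N)) := by
        refine exp_le_exp.2 ?_
        nlinarith [mul_le_mul_of_nonneg_left hsum_inv hz0]
    _ = exp 52 * log N ^ z := by
        rw [exp_add, rpow_def_of_pos hlogN, mul_comm z]

lemma prod_primesLE_tsum_omega3Weight_le {z : ℝ} (hz0 : 0 ≤ z) (hz3 : z < 3) {N : ℕ}
    (hN : 3 ≤ N) :
    ∏ p ∈ Nat.primesLE N, ∑' k, omega3Weight z (p ^ k)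
      ≤ 27 / 2 * exp 52 / (3 - z) * log N ^ z := by
  set F : ℕ → ℝ := fun p ↦ ∑' k, omega3Weight z (p ^ k)
  have hF : ∀ p, 0 ≤ F p := fun p ↦ tsum_nonneg fun k ↦ omega3Weight_nonneg hz0 _
  set t := ((Nat.primesLE N).erase 2).erase 3
  have ht5 : ∀ p ∈ t, 5 ≤ p := fun p hp ↦ by
    simp only [t, mem_erase, Nat.mem_primesLE] at hp
    obtain ⟨hp3, hp2, -, hp⟩ := hp
    have := hp.two_le
    have : p ≠ 4 := by rintro rfl; norm_num at hp
    omega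
  have hsplit : ∏ p ∈ Nat.primesLE N, F p = F 2 * (F 3 * ∏ p ∈ t, F p) := by
    have h2 : 2 ∈ Nat.primesLE N := Nat.mem_primesLE.2 ⟨by omega, Nat.prime_two⟩
    have h3 : 3 ∈ (Nat.primesLE N).erase 2 :=
      mem_erase.2 ⟨by norm_num, Nat.mem_primesLE.2 ⟨hN, Nat.prime_three⟩⟩
    rw [mul_prod_erase _ F h3, mul_prod_erase _ F h2]
  have h2 : F 2 ≤ 3 := (tsum_omega3Weight_two_pow hz0).le
  have h3 : F 3 ≤ 9 / 2 / (3 - z) := tsum_omega3Weight_three_pow_le hz0 hz3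
  have hrest : ∏ p ∈ t, F p ≤ exp 52 * log N ^ z :=
    prod_tsum_omega3Weight_le_of_five_le hz0 hz3 (by omega)
      ((erase_subset _ _).trans (erase_subset _ _)) ht5
  have hprod : 0 ≤ ∏ p ∈ t, F p := prod_nonneg fun p _ ↦ hF p
  calc ∏ p ∈ Nat.primesLE N, F p ≤ 3 * (9 / 2 / (3 - z) * (exp 52 * log N ^ z)) := by
        rw [hsplit]
        have : 0 < 3 - z := by linarith
        exact mul_le_mul h2 (mul_le_mul h3 hrest hprod (by positivity))
          (mul_nonneg (hF 3) hprod) (by norm_num)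
    _ = 27 / 2 * exp 52 / (3 - z) * log N ^ z := by ring

/-- `∑_{n ≤ x} z^{Ω₃(n)}/φ(n) ≪ (log x)^z / (3 - z)` uniformly for `1 < z < 3`. -/
theorem sum_zOmega3_div_totient :
    ∃ c : ℝ, 0 < c ∧ ∀ x : ℝ, 3 ≤ x → ∀ z : ℝ, 1 < z → z < 3 →
      ∑ n ∈ Finset.Icc 1 ⌊x⌋₊, z ^ Omega3 n / (Nat.totient n : ℝ)
        ≤ c / (3 - z) * Real.log x ^ z := by
  refine ⟨27 / 2 * exp 52, by positivity, fun x hx z hz1 hz3 ↦ ?_⟩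
  have hz0 : 0 ≤ z := by linarith
  have hN : 3 ≤ ⌊x⌋₊ := Nat.le_floor (by exact_mod_cast hx)
  have hsummable : ∀ {p : ℕ}, p.Prime → Summable fun k ↦ omega3Weight z (p ^ k) :=
    fun hp ↦     (hasSum_omega3Weight_prime_pow hz0 hp (pow_Omega3_lt hz3 hp)).summable
  calc ∑ n ∈ Icc 1 ⌊x⌋₊, z ^ Omega3 n / (n.totient : ℝ)
      ≤ ∏ p ∈ Nat.primesLE ⌊x⌋₊, ∑' k, omega3Weight z (p ^ k) :=
        sum_Icc_le_prod_primesLE_tsum (omega3Weight_nonneg hz0) (omega3Weight_one z)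
          (omega3Weight_mul z) hsummable _
    _ ≤ 27 / 2 * exp 52 / (3 - z) * log ⌊x⌋₊ ^ z :=
        prod_primesLE_tsum_omega3Weight_le hz0 hz3 hN
    _ ≤ 27 / 2 * exp 52 / (3 - z) * log x ^ z := by
        have : 0 < 3 - z := by linarith
        have : 0 ≤ log ⌊x⌋₊ := log_natCast_nonneg _
        gcongr
        exact Nat.floor_le (by linarith)
end
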